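/- arXiv:2503.22944 — 3 statements merged into one kernel-verified Lean document; each statement's English description precedes it below -/
import Mathlib

section
/- Let (X,d) be a compact metric space and T : X → X a continuous map. If for every ε > 0 one has lim_{n→∞} Span(T,n,ε)/n = 0 (a condition which the paper derives from the generalized entropy of T being strictly less than the linear order of growth [n]), then the topological entropy of the induced hyperspace map is zero: h(T_K) = 0. -/
open Metric Filter TopologicalSpace MeasureTheory Set

namespace Paper

variable {α : Type*}

/-- `A` is `(n,ε)`-separated for the iterates of `S`, w.r.t. the distance function `D`. -/
def IsSep (D : α → α → ℝ) (S : α → α) (n : ℕ) (ε : ℝ) (A : Set α) : Prop :=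
  ∀ x ∈ A, ∀ y ∈ A, x ≠ y → ∃ i < n, ε ≤ D (S^[i] x) (S^[i] y)

/-- `Sep(S,n,ε)`: maximal cardinality of an `(n,ε)`-separated set. -/
noncomputable def sep (D : α → α → ℝ) (S : α → α) (n : ℕ) (ε : ℝ) : ℕ :=
  sSup {k | ∃ A : Finset α, A.card = k ∧ IsSep D S n ε ↑A}

/-- `E` is `(n,ε)`-spanning for the iterates of `S`, w.r.t. the distance function `D`. -/
def IsSpan (D : α → α → ℝ) (S : α → α) (n : ℕ) (ε : ℝ) (E : Finset α) : Prop :=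
  ∀ x : α, ∃ y ∈ E, ∀ i < n, D (S^[i] x) (S^[i] y) < ε

/-- `Span(S,n,ε)`: minimal cardinality of an `(n,ε)`-spanning set. -/
noncomputable def span (D : α → α → ℝ) (S : α → α) (n : ℕ) (ε : ℝ) : ℕ :=
  sInf {k | ∃ E : Finset α, E.card = k ∧ IsSpan D S n ε E}

variable {X : Type*} [MetricSpace X]

/-- The induced hyperspace map `T_K` on nonempty compact (= closed, for `X` compact) subsets. -/
noncomputable def indK (T : X → X) (hT : Continuous T) :
    NonemptyCompacts X → NonemptyCompacts X :=
  fun W => ⟨⟨T '' ↑W, W.isCompact.image hT⟩, W.nonempty.image T⟩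

variable [MeasurableSpace X] [BorelSpace X]

/-- The measure-induced (push-forward) map `T_*` on Borel probability measures. -/
noncomputable def push (T : X → X) (hT : Continuous T) :
    ProbabilityMeasure X → ProbabilityMeasure X :=
  fun μ => ⟨(μ : Measure X).map T, Measure.isProbabilityMeasure_map hT.measurable.aemeasurable⟩

/-- The (one-sided) Lévy–Prokhorov metric
`ρ(μ,ν) = inf {δ > 0 | μ(A) ≤ ν(A_δ) + δ for all Borel A}`. -/
noncomputable def prokhorov (μ ν : ProbabilityMeasure X) : ℝ :=
  sInf {δ : ℝ | 0 < δ ∧ ∀ A : Set X, MeasurableSet A →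
    (μ A : ℝ) ≤ (ν (Metric.thickening δ A) : ℝ) + δ}

end Paper

/-!
A finite `(n, δ)`-spanning set `E` for `T` yields an `(n, ε)`-spanning family for `T_K` for any
`ε > δ`: approximate a closed set `W` by the nonempty subset of those points of `E` that shadow some
point of `W` along the first `n` iterates. Hence `Span(T_K, n, ε) ≤ 2 ^ Span(T, n, ε / 2)`, so
`log Span(T_K, n, ε) / n ≤ log 2 · Span(T, n, ε / 2) / n → 0`.
-/

open Metric Filter Topology

namespace Paper

section Span

variable {α : Type*} {D : α → α → ℝ} {S : α → α} {n : ℕ} {ε : ℝ}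

lemma span_le_card {E : Finset α} (hE : IsSpan D S n ε E) : span D S n ε ≤ E.card :=
  Nat.sInf_le ⟨E, rfl, hE⟩

lemma exists_isSpan_card_eq_span (h : ∃ E : Finset α, IsSpan D S n ε E) :
    ∃ E : Finset α, E.card = span D S n ε ∧ IsSpan D S n ε E := by
  obtain ⟨E, hE⟩ := h
  exact Nat.sInf_mem (s := {k | ∃ E : Finset α, E.card = k ∧ IsSpan D S n ε E}) ⟨_, E, rfl, hE⟩

end Span

variable {X : Type*} [MetricSpace X] {T : X → X} {n : ℕ} {δ ε : ℝ}

lemma exists_isSpan [CompactSpace X] (hT : Continuous T) (n : ℕ) (hε : 0 < ε) :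
    ∃ E : Finset X, IsSpan dist T n ε E := by
  obtain ⟨E, hE⟩ := isCompact_univ.elim_finite_subcover
    (fun y : X => ⋂ i ∈ Finset.range n, T^[i] ⁻¹' ball (T^[i] y) ε)
    (fun y => isOpen_biInter_finset fun i _ => (hT.iterate i).isOpen_preimage _ isOpen_ball)
    (fun x _ => Set.mem_iUnion.2 ⟨x, by simp [hε]⟩)
  refine ⟨E, fun x => ?_⟩
  simpa only [Set.mem_iUnion, Set.mem_iInter, Set.mem_preimage, Finset.mem_range, mem_ball,
    exists_prop] using hE (Set.mem_univ x)

lemma coe_indK_iterate (hT : Continuous T) (i : ℕ) (W : NonemptyCompacts X) :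
    ((indK T hT)^[i] W : Set X) = T^[i] '' W := by
  induction i with
  | zero => simp
  | succ k ih =>
    rw [Function.iterate_succ_apply', Function.iterate_succ', Set.image_comp, ← ih]
    rfl

lemma hausdorffDist_image_iterate_le {A B : Set X} (hδ : 0 ≤ δ)
    (hAB : ∀ x ∈ A, ∃ y ∈ B, ∀ i < n, dist (T^[i] x) (T^[i] y) ≤ δ)
    (hBA : ∀ y ∈ B, ∃ x ∈ A, ∀ i < n, dist (T^[i] x) (T^[i] y) ≤ δ) {i : ℕ} (hi : i < n) :
    hausdorffDist (T^[i] '' A) (T^[i] '' B) ≤ δ := by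
  apply hausdorffDist_le_of_mem_dist hδ
  · rintro _ ⟨x, hx, rfl⟩
    obtain ⟨y, hy, hxy⟩ := hAB x hx
    exact ⟨T^[i] y, Set.mem_image_of_mem _ hy, hxy i hi⟩
  · rintro _ ⟨y, hy, rfl⟩
    obtain ⟨x, hx, hxy⟩ := hBA y hy
    exact ⟨T^[i] x, Set.mem_image_of_mem _ hx, dist_comm (T^[i] x) _ ▸ hxy i hi⟩

lemma exists_subset_hausdorffDist_image_iterate_le {E : Finset X} (hE : IsSpan dist T n δ E)
    (hδ : 0 ≤ δ) {W : Set X} (hW : W.Nonempty) :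
    ∃ s ⊆ E, s.Nonempty ∧ ∀ i < n, hausdorffDist (T^[i] '' W) (T^[i] '' s) ≤ δ := by
  classical
  set s := E.filter fun y => ∃ x ∈ W, ∀ i < n, dist (T^[i] x) (T^[i] y) ≤ δ
  have hWs : ∀ x ∈ W, ∃ y ∈ s, ∀ i < n, dist (T^[i] x) (T^[i] y) ≤ δ := fun x hx => by
    obtain ⟨y, hyE, hxy⟩ := hE x
    have hxy' : ∀ i < n, dist (T^[i] x) (T^[i] y) ≤ δ := fun i hi => (hxy i hi).le
    exact ⟨y, Finset.mem_filter.2 ⟨hyE, x, hx, hxy'⟩, hxy'⟩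
  have hsW : ∀ y ∈ s, ∃ x ∈ W, ∀ i < n, dist (T^[i] x) (T^[i] y) ≤ δ :=
    fun y hy => (Finset.mem_filter.1 hy).2
  obtain ⟨x, hx⟩ := hW
  obtain ⟨y, hy, -⟩ := hWs x hx
  exact ⟨s, Finset.filter_subset _ _, ⟨y, hy⟩,
    fun i hi => hausdorffDist_image_iterate_le hδ hWs hsW hi⟩

def nonemptyCompactsOfFinset (s : Finset X) (hs : s.Nonempty) : NonemptyCompacts X :=
  ⟨⟨s, s.finite_toSet.isCompact⟩, hs⟩

lemma exists_isSpan_indK_card_le (hT : Continuous T) {E : Finset X} (hE : IsSpan dist T n δ E)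
    (hδ : 0 ≤ δ) (hδε : δ < ε) :
    ∃ F : Finset (NonemptyCompacts X), F.card ≤ 2 ^ E.card ∧ IsSpan dist (indK T hT) n ε F := by
  classical
  refine ⟨(E.powerset.subtype Finset.Nonempty).image fun s => nonemptyCompactsOfFinset s.1 s.2,
    ?_, fun W => ?_⟩
  · calc _ ≤ (E.powerset.subtype Finset.Nonempty).card := Finset.card_image_le
      _ = (E.powerset.filter Finset.Nonempty).card := Finset.card_subtype _ _
      _ ≤ 2 ^ E.card := (Finset.card_filter_le _ _).trans_eq (Finset.card_powerset E)
  obtain ⟨s, hsE, hs, hWs⟩ := exists_subset_hausdorffDist_image_iterate_le hE hδ W.nonempty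
  refine ⟨nonemptyCompactsOfFinset s hs, Finset.mem_image.2 ⟨⟨s, hs⟩, ?_, rfl⟩, fun i hi => ?_⟩
  · exact Finset.mem_subtype.2 (Finset.mem_powerset.2 hsE)
  · rw [NonemptyCompacts.dist_eq, coe_indK_iterate, coe_indK_iterate]
    exact (hWs i hi).trans_lt hδε

lemma span_indK_le_two_pow [CompactSpace X] (hT : Continuous T) (hδ : 0 < δ) (hδε : δ < ε) :
    span dist (indK T hT) n ε ≤ 2 ^ span dist T n δ := by
  obtain ⟨E, hEcard, hE⟩ := exists_isSpan_card_eq_span (exists_isSpan hT n hδ)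
  obtain ⟨F, hFcard, hF⟩ := exists_isSpan_indK_card_le hT hE hδ.le hδε
  exact (span_le_card hF).trans (hEcard ▸ hFcard)

end Paper

lemma Real.log_natCast_le_mul_log_of_le_pow {a b c : ℕ} (h : a ≤ c ^ b) :
    Real.log a ≤ b * Real.log c := by
  rcases Nat.eq_zero_or_pos a with rfl | ha
  · simpa using mul_nonneg (Nat.cast_nonneg b) (Real.log_natCast_nonneg c)
  · rw [← Real.log_pow]
    exact Real.log_le_log (by exact_mod_cast ha) (by exact_mod_cast h)

lemma tendsto_log_div_of_le_pow {a b : ℕ → ℕ} {c : ℕ} (hab : ∀ n, a n ≤ c ^ b n)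
    (hb : Tendsto (fun n => (b n : ℝ) / n) atTop (𝓝 0)) :
    Tendsto (fun n => Real.log (a n) / n) atTop (𝓝 0) := by
  have hupper : Tendsto (fun n => (b n : ℝ) / n * Real.log c) atTop (𝓝 0) := by
    simpa using hb.mul_const (Real.log c)
  refine tendsto_of_tendsto_of_tendsto_of_le_of_le tendsto_const_nhds hupper
    (fun n => div_nonneg (Real.log_natCast_nonneg _) n.cast_nonneg) (fun n => ?_)
  rw [div_mul_eq_mul_div]
  exact div_le_div_of_nonneg_right (Real.log_natCast_le_mul_log_of_le_pow (hab n)) n.cast_nonneg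

open Paper Filter in
/-- If `Span(T,n,ε)/n → 0` for every `ε > 0` (which follows from the
generalized entropy of `T` being strictly less than the linear order of growth), then the
topological entropy of the induced hyperspace map `T_K` is zero. -/
theorem induced_hyperspace_zero_entropy
    {X : Type*} [MetricSpace X] [CompactSpace X] (T : X → X) (hT : Continuous T)
    (h : ∀ ε > (0 : ℝ),
      Filter.Tendsto (fun n : ℕ => (span dist T n ε : ℝ) / n) Filter.atTop (nhds 0)) :
    Filter.Tendsto (fun ε : ℝ =>
        Filter.limsup
          (fun n : ℕ => ENNReal.ofReal (Real.log (span dist (indK T hT) n ε) / n))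
          Filter.atTop)
      (nhdsWithin 0 (Set.Ioi 0)) (nhds (0 : ENNReal)) := by
  have hlimsup : ∀ ε > (0 : ℝ), Filter.limsup
      (fun n : ℕ => ENNReal.ofReal (Real.log (span dist (indK T hT) n ε) / n)) atTop = 0 := by
    intro ε hε
    have hlog := tendsto_log_div_of_le_pow
      (fun n => span_indK_le_two_pow hT (half_pos hε) (half_lt_self hε)) (h _ (half_pos hε))
    simpa using (ENNReal.tendsto_ofReal hlog).limsup_eq
  refine tendsto_const_nhds.congr' ?_
  filter_upwards [self_mem_nhdsWithin] with ε hε using (hlimsup ε hε).symm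
end

section
/- Let (X,d) be a compact metric space, T : X → X a continuous map, and ρ the Lévy–Prokhorov metric on the space M(X) of Borel probability measures on X. Then for every ε ∈ (0,1) and every n ∈ ℕ, the separated numbers of the pushforward map satisfy Sep(T_*, n, ε) ≥ Sep(T, n, ε), where the left-hand side is computed with respect to ρ and the right-hand side with respect to d. (This yields the inequality o(T_*) ≥ o(T) between generalized entropies.) -/
open Metric Filter TopologicalSpace MeasureTheory Set

/-!
Sending a point to its Dirac mass conjugates `T` to `T_*`, and `ρ(δ_x, δ_y) ≥ min (d(x, y), 1)`
(test `ρ` on the singleton `{x}`), so for `ε < 1` every `(n,ε)`-separated set of `T` yields one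
of `T_*` of the same size. This needs the supremum defining `Sep(T_*, n, ε)` to be finite (an
unbounded `sSup` in `ℕ` is `0`), which holds because `ρ` is dominated by the symmetric
Lévy–Prokhorov metric, for which `M(X)` is compact: a finite cover by sets of `ρ`-diameter `< ε`
bounds separated sets by `(number of sets)^n`.
-/

open Metric MeasureTheory

namespace Paper

section Separated

variable {α β : Type*} {D : α → α → ℝ} {D' : β → β → ℝ} {S : α → α} {S' : β → β}
  {n : ℕ} {ε : ℝ}

theorem IsSep.card_le_pow {F : Type*} [Fintype F] (c : α → F)
    (hc : ∀ x y, c x = c y → D x y < ε) {A : Finset α} (hA : IsSep D S n ε A) :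
    A.card ≤ Fintype.card F ^ n := by
  have hinj : Set.InjOn (fun x (i : Fin n) => c (S^[i] x)) A := by
    intro x hx y hy hxy
    by_contra hne
    obtain ⟨i, hi, hsep⟩ := hA x hx y hy hne
    exact (hc _ _ (congrFun hxy ⟨i, hi⟩)).not_ge hsep
  simpa using Finset.card_le_card_of_injOn _ (fun _ _ => Finset.mem_coe.2 (Finset.mem_univ _)) hinj

theorem bddAbove_card_isSep {F : Type*} [Fintype F] (c : α → F)
    (hc : ∀ x y, c x = c y → D x y < ε) :
    BddAbove {k | ∃ A : Finset α, A.card = k ∧ IsSep D S n ε A} :=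
  ⟨Fintype.card F ^ n, by rintro k ⟨A, rfl, hA⟩; exact hA.card_le_pow c hc⟩

theorem IsSep.image {f : β → α} (hf : Function.Semiconj f S' S)
    (hfD : ∀ x y, ε ≤ D' x y → ε ≤ D (f x) (f y)) {A : Set β} (hA : IsSep D' S' n ε A) :
    IsSep D S n ε (f '' A) := by
  rintro _ ⟨x, hx, rfl⟩ _ ⟨y, hy, rfl⟩ hxy
  obtain ⟨i, hi, hsep⟩ := hA x hx y hy (ne_of_apply_ne f hxy)
  exact ⟨i, hi, by simpa only [(hf.iterate_right i).eq] using hfD _ _ hsep⟩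

theorem sep_le_sep_of_semiconj {f : β → α} (hf : Function.Injective f)
    (hfS : Function.Semiconj f S' S) (hfD : ∀ x y, ε ≤ D' x y → ε ≤ D (f x) (f y))
    (hbdd : BddAbove {k | ∃ A : Finset α, A.card = k ∧ IsSep D S n ε A}) :
    sep D' S' n ε ≤ sep D S n ε := by
  classical
  refine csSup_le_csSup hbdd ⟨0, ∅, rfl, by simp [IsSep]⟩ ?_
  rintro _ ⟨A, rfl, hA⟩
  exact ⟨A.image f, Finset.card_image_of_injective A hf, by simpa using hA.image hfS hfD⟩

end Separated

end Paper

theorem exists_coloring_dist_lt {α : Type*} [PseudoMetricSpace α] [CompactSpace α] {ε : ℝ}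
    (hε : 0 < ε) : ∃ (t : Finset α) (c : α → t), ∀ x y, c x = c y → dist x y < ε := by
  obtain ⟨t, -, ht, hcov⟩ :=
    finite_cover_balls_of_compact (isCompact_univ (X := α)) (half_pos hε)
  have hmem : ∀ x, ∃ y : ht.toFinset, x ∈ ball (y : α) (ε / 2) := fun x => by
    obtain ⟨y, hy, hxy⟩ := Set.mem_iUnion₂.1 (hcov (Set.mem_univ x))
    exact ⟨⟨y, ht.mem_toFinset.2 hy⟩, hxy⟩
  choose c hc using hmem
  refine ⟨ht.toFinset, c, fun x y hxy => ?_⟩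
  have hy := hc y
  rw [← hxy] at hy
  calc dist x y ≤ dist x (c x) + dist y (c x) := dist_triangle_right _ _ _
    _ < ε / 2 + ε / 2 := add_lt_add (hc x) hy
    _ = ε := add_halves ε

namespace MeasureTheory.ProbabilityMeasure

variable {X : Type*} [MeasurableSpace X]

noncomputable def dirac (x : X) : ProbabilityMeasure X :=
  ⟨Measure.dirac x, inferInstance⟩

theorem dirac_apply (x : X) {s : Set X} (hs : MeasurableSet s) :
    (dirac x s : ℝ) = s.indicator 1 x := by
  by_cases h : x ∈ s <;> simp [dirac, Measure.dirac_apply' _ hs, h]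

theorem dirac_injective [MeasurableSpace.SeparatesPoints X] : Function.Injective (dirac (X := X)) :=
  fun _ _ h => injective_dirac (congrArg Subtype.val h)

end MeasureTheory.ProbabilityMeasure

namespace Paper

variable {X : Type*} [MetricSpace X] [MeasurableSpace X]

theorem prokhorov_le_levyProkhorovDist (μ ν : ProbabilityMeasure X) :
    prokhorov μ ν ≤ levyProkhorovDist (μ : Measure X) ν := by
  refine le_of_forall_gt_imp_ge_of_dense fun δ hδ => ?_
  have hδ0 : 0 < δ := ENNReal.toReal_nonneg.trans_lt hδ
  have hlt : levyProkhorovEDist (μ : Measure X) ν < ENNReal.ofReal δ :=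
    (ENNReal.lt_ofReal_iff_toReal_lt (levyProkhorovEDist_ne_top _ _)).2 hδ
  unfold prokhorov
  refine csInf_le ⟨0, fun _ h => h.1.le⟩ ⟨hδ0, fun A hA => ?_⟩
  have h := left_measure_le_of_levyProkhorovEDist_lt hlt hA
  rw [ENNReal.toReal_ofReal hδ0.le] at h
  have h' := ENNReal.toReal_mono (by finiteness) h
  rwa [ENNReal.toReal_add (by finiteness) (by finiteness), ENNReal.toReal_ofReal hδ0.le] at h'

theorem semiconj_dirac_push [BorelSpace X] (T : X → X) (hT : Continuous T) :
    Function.Semiconj ProbabilityMeasure.dirac T (push T hT) :=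
  fun x => Subtype.ext (Measure.map_dirac' hT.measurable x).symm

theorem le_prokhorov_dirac [OpensMeasurableSpace X] {ε : ℝ} (hε : ε ≤ 1) {x y : X}
    (hxy : ε ≤ dist x y) :
    ε ≤ prokhorov (ProbabilityMeasure.dirac x) (ProbabilityMeasure.dirac y) := by
  refine le_csInf ⟨1, one_pos, fun A _ => ?_⟩ fun δ ⟨hδ, h⟩ => ?_
  · have : (ProbabilityMeasure.dirac x A : ℝ) ≤ 1 := by
      exact_mod_cast ProbabilityMeasure.apply_le_one _ A
    linarith [(ProbabilityMeasure.dirac y (thickening 1 A)).coe_nonneg]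
  by_contra! hδε
  have hy : y ∉ ball x δ := by
    rw [mem_ball, dist_comm]
    linarith
  have hx := h {x} (measurableSet_singleton x)
  rw [thickening_singleton, ProbabilityMeasure.dirac_apply _ (measurableSet_singleton x),
    ProbabilityMeasure.dirac_apply _ measurableSet_ball, Set.indicator_of_notMem hy,
    Set.indicator_of_mem (Set.mem_singleton x)] at hx
  simp only [Pi.one_apply, zero_add] at hx
  linarith

theorem exists_coloring_prokhorov_lt [BorelSpace X] [CompactSpace X] {ε : ℝ} (hε : 0 < ε) :
    ∃ (t : Finset (LevyProkhorov (ProbabilityMeasure X))) (c : ProbabilityMeasure X → t),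
      ∀ μ ν, c μ = c ν → prokhorov μ ν < ε := by
  have := (LevyProkhorov.probabilityMeasureHomeomorph (Ω := X)).compactSpace
  obtain ⟨t, c, hc⟩ := exists_coloring_dist_lt (α := LevyProkhorov (ProbabilityMeasure X)) hε
  exact ⟨t, fun μ => c (.ofMeasure μ), fun μ ν h =>
    (prokhorov_le_levyProkhorovDist μ ν).trans_lt (hc _ _ h)⟩

end Paper

open Paper in
/-- For every `ε ∈ (0,1)` and every `n`, the separated numbers of the
push-forward map `T_*` (w.r.t. the Lévy–Prokhorov metric `ρ`) dominate those of `T`: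
`Sep(T_*, n, ε) ≥ Sep(T, n, ε)`. -/
theorem sep_pushforward_ge_sep_base
    {X : Type*} [MetricSpace X] [CompactSpace X] [MeasurableSpace X] [BorelSpace X]
    (T : X → X) (hT : Continuous T) :
    ∀ ε : ℝ, 0 < ε → ε < 1 → ∀ n : ℕ,
      sep dist T n ε ≤ sep prokhorov (push T hT) n ε := by
  intro ε hε hε1 n
  obtain ⟨t, c, hc⟩ := exists_coloring_prokhorov_lt (X := X) hε
  exact sep_le_sep_of_semiconj ProbabilityMeasure.dirac_injective (semiconj_dirac_push T hT)
    (fun x y hxy => le_prokhorov_dirac hε1.le hxy) (bddAbove_card_isSep c hc)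
end

section
/- Let Σ₂ = {0,1}^ℤ with the shift map σ and the metric d(x,y) = 2^{−min{|k| : x_k ≠ y_k}} for x ≠ y. Let p ∈ Σ₂ be the point with p_0 = 1 and p_k = 0 for all k ≠ 0, and let S be the closure of the σ-orbit {σ^n p : n ∈ ℤ} in Σ₂ (a compact σ-invariant set). Then the induced hyperspace map σ_K of the restriction σ|_S, acting on the hyperspace (K(S), d_H) of nonempty closed subsets of S, has topological entropy h(σ_K) = log 2. Moreover, its generalized entropy is o(σ_K) = [2^n] = [e^{(log 2)·n}]. -/
open Metric Filter TopologicalSpace MeasureTheory Set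

namespace Paper

/-- Minimal `(n,ε)`-spanning cardinality for the iterates of `S` restricted to a subset `B`,
w.r.t. the distance function `D`. -/
noncomputable def spanIn {α : Type*} (D : α → α → ℝ) (S : α → α) (B : Set α)
    (n : ℕ) (ε : ℝ) : ℕ :=
  sInf {k | ∃ E : Finset α, ↑E ⊆ B ∧ E.card = k ∧
    ∀ x ∈ B, ∃ y ∈ E, ∀ i < n, D (S^[i] x) (S^[i] y) < ε}

end Paper

/-!
The orbit closure of `p` is `{0} ∪ {δ_j : j ∈ ℤ}`, where `δ_j` has its only `1` at `j`, and
`d(δ_j, 0) = 2^{-|j|}`. Hence, during `n` steps, a closed set `A` stays within Hausdorff distance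
`2^{-m}` of its image under the map that fixes the `δ_j` with `j ∈ [-m, m + n - 1]` and sends every
other point to `0`; there are at most `2^{2m+n+1}` such images, so `Span(σ_K, n, ε) ≤ C_ε 2^n`
(take `2^{-m} < ε`).
Conversely, for `w ∈ {0,1}^n` the set `{0} ∪ {δ_i : w_i = 1}` contains, after `i` shifts, a point
with a `1` at coordinate `0` exactly when `w_i = 1`, and points differing at coordinate `0` are at
distance `1`. These `2^n` sets are therefore `(n, 1)`-separated, so `Span(σ_K, n, ε) ≥ 2^n` for
`ε ≤ 1/2`, and `log Span(σ_K, n, ε) / n → log 2`.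
-/

namespace Paper

section Spanning

variable {α : Type*}

def IsSpanningIn (D : α → α → ℝ) (S : α → α) (B : Set α) (n : ℕ) (ε : ℝ) (E : Finset α) :
    Prop :=
  ↑E ⊆ B ∧ ∀ x ∈ B, ∃ y ∈ E, ∀ i < n, D (S^[i] x) (S^[i] y) < ε

variable {D : α → α → ℝ} {S : α → α} {B : Set α} {n : ℕ} {ε : ℝ}

theorem spanIn_le_card {E : Finset α} (hE : IsSpanningIn D S B n ε E) :
    spanIn D S B n ε ≤ E.card :=
  Nat.sInf_le ⟨E, hE.1, rfl, hE.2⟩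

theorem le_spanIn {k : ℕ} (hne : ∃ E, IsSpanningIn D S B n ε E)
    (h : ∀ E, IsSpanningIn D S B n ε E → k ≤ E.card) : k ≤ spanIn D S B n ε := by
  obtain ⟨E₀, hE₀⟩ := hne
  refine le_csInf ⟨E₀.card, E₀, hE₀.1, rfl, hE₀.2⟩ ?_
  rintro _ ⟨E, hEB, rfl, hE⟩
  exact h E ⟨hEB, hE⟩

end Spanning

section Hausdorff

variable {X : Type*} [PseudoMetricSpace X]

theorem hausdorffDist_image_le {β : Type*} {s : Set β} {φ ψ : β → X} {r : ℝ} (hr : 0 ≤ r)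
    (h : ∀ x ∈ s, dist (φ x) (ψ x) ≤ r) : hausdorffDist (φ '' s) (ψ '' s) ≤ r :=
  hausdorffDist_le_of_mem_dist hr
    (forall_mem_image.2 fun x hx => ⟨ψ x, mem_image_of_mem ψ hx, h x hx⟩)
    (forall_mem_image.2 fun x hx => ⟨φ x, mem_image_of_mem φ hx, by rw [dist_comm]; exact h x hx⟩)

theorem le_hausdorffDist_of_mem [BoundedSpace X] {s t : Set X} {x : X} {r : ℝ} (hx : x ∈ s)
    (ht : t.Nonempty) (h : ∀ y ∈ t, r ≤ dist x y) : r ≤ hausdorffDist s t :=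
  ((le_infDist ht).2 h).trans <| infDist_le_hausdorffDist_of_mem hx <|
    hausdorffEDist_ne_top_of_nonempty_of_bounded ⟨x, hx⟩ ht (.all s) (.all t)

variable {f : X → X} {B : Set (Set X)} {n : ℕ} {ε : ℝ}

theorem exists_isSpanningIn_card_le_two_pow (F : Finset X) (τ : X → X) (hτF : ∀ x, τ x ∈ F)
    (hτB : ∀ A ∈ B, τ '' A ∈ B) {r : ℝ} (hr : 0 ≤ r) (hrε : r < ε)
    (hτ : ∀ A ∈ B, ∀ x ∈ A, ∀ i < n, dist (f^[i] x) (f^[i] (τ x)) ≤ r) :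
    ∃ E, IsSpanningIn hausdorffDist (image f) B n ε E ∧ E.card ≤ 2 ^ F.card := by
  classical
  refine ⟨(F.powerset.image ((↑) : Finset X → Set X)).filter (· ∈ B), ⟨?_, ?_⟩, ?_⟩
  · intro A hA
    exact (Finset.mem_filter.1 hA).2
  · intro A hA
    refine ⟨τ '' A, Finset.mem_filter.2 ⟨Finset.mem_image.2 ⟨F.filter (· ∈ τ '' A), ?_, ?_⟩,
      hτB A hA⟩, fun i hi => ?_⟩
    · exact Finset.mem_powerset.2 (Finset.filter_subset _ _)
    · ext x
      rw [Finset.coe_filter]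
      exact and_iff_right_of_imp (by rintro ⟨y, -, rfl⟩; exact hτF y)
    · rw [← image_iterate_eq, image_image]
      exact (hausdorffDist_image_le hr fun x hx => hτ A hA x hx i hi).trans_lt hrε
  · calc _ ≤ (F.powerset.image ((↑) : Finset X → Set X)).card := Finset.card_filter_le _ _
      _ ≤ F.powerset.card := Finset.card_image_le
      _ = 2 ^ F.card := Finset.card_powerset F

theorem card_le_card_of_isSpanningIn [BoundedSpace X] (hB : ∀ A ∈ B, A.Nonempty)
    {ι : Type*} [Fintype ι] {F : ι → Set X} (hFB : ∀ a, F a ∈ B)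
    (hF : Pairwise fun a b => ∃ i < n, 2 * ε ≤ hausdorffDist (f^[i] '' F a) (f^[i] '' F b))
    {E : Finset (Set X)} (hE : IsSpanningIn hausdorffDist (image f) B n ε E) :
    Fintype.card ι ≤ E.card := by
  choose Y hYE hY using fun a => hE.2 (F a) (hFB a)
  simp only [← image_iterate_eq] at hY
  have hY_inj : Function.Injective Y := by
    intro a b hab
    by_contra hne
    obtain ⟨i, hi, hsep⟩ := hF hne
    have hfin : hausdorffEDist (f^[i] '' F a) (f^[i] '' Y a) ≠ ⊤ :=
      hausdorffEDist_ne_top_of_nonempty_of_bounded ((hB _ (hFB a)).image _)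
        ((hB _ (hE.1 (hYE a))).image _) (.all _) (.all _)
    have := hausdorffDist_triangle (u := f^[i] '' F b) hfin
    have hb := hY b i hi
    rw [← hab, hausdorffDist_comm] at hb
    linarith [hY a i hi]
  simpa using Fintype.card_le_of_injective (fun a => (⟨Y a, hYE a⟩ : E))
    fun a b h => hY_inj (Subtype.ext_iff.1 h)

end Hausdorff

theorem tendsto_log_div_of_pow_le_of_le_mul_pow {a : ℕ → ℝ} {b C : ℝ} (hb : 0 < b)
    (hlow : ∀ n, b ^ n ≤ a n) (hup : ∀ n, a n ≤ C * b ^ n) :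
    Tendsto (fun n => Real.log (a n) / n) atTop (nhds (Real.log b)) := by
  have hC : 0 < C := pos_of_mul_pos_left ((pow_pos hb 0).trans_le ((hlow 0).trans (hup 0)))
    (pow_pos hb 0).le
  refine tendsto_of_tendsto_of_tendsto_of_le_of_le' tendsto_const_nhds
    (by simpa using (tendsto_const_div_atTop_nhds_zero_nat (Real.log C)).add_const (Real.log b))
    ?_ ?_
  · filter_upwards [eventually_gt_atTop 0] with n hn
    rw [le_div_iff₀ (Nat.cast_pos.2 hn), mul_comm, ← Real.log_pow]
    exact Real.log_le_log (pow_pos hb n) (hlow n)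
  · filter_upwards [eventually_gt_atTop 0] with n hn
    rw [div_add' _ _ _ (Nat.cast_pos.2 hn).ne', div_le_div_iff_of_pos_right (Nat.cast_pos.2 hn),
      mul_comm (Real.log b), ← Real.log_pow, ← Real.log_mul hC.ne' (pow_pos hb n).ne']
    exact Real.log_le_log ((pow_pos hb n).trans_le (hlow n)) (hup n)

def shift (x : ℤ → Bool) : ℤ → Bool := fun k => x (k + 1)

def single (j : ℤ) : ℤ → Bool := fun k => decide (k = j)

def blank : ℤ → Bool := fun _ => false

def orbitClosure : Set (ℤ → Bool) := insert blank (range single)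

theorem iterate_shift_apply (i : ℕ) (x : ℤ → Bool) (k : ℤ) : shift^[i] x k = x (k + i) := by
  induction i generalizing x with
  | zero => simp
  | succ i ih =>
    rw [Function.iterate_succ_apply, ih]
    simp only [shift]
    push_cast
    ring_nf

theorem iterate_shift_single (i : ℕ) (j : ℤ) : shift^[i] (single j) = single (j - i) := by
  ext k
  simp only [iterate_shift_apply, single, decide_eq_decide]
  omega

theorem iterate_shift_blank (i : ℕ) : shift^[i] blank = blank :=
  Function.iterate_fixed rfl i

theorem single_ne_blank (j : ℤ) : single j ≠ blank :=
  fun h => by simpa [single, blank] using congrFun h j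

theorem single_injective : Function.Injective single :=
  fun i j h => by simpa [single] using congrFun h i

theorem orbitClosure_eq_setOf :
    orbitClosure = {x | ∀ j k, x j = true → x k = true → j = k} := by
  ext x
  simp only [orbitClosure, mem_insert_iff, mem_range, mem_ofPred_eq]
  constructor
  · rintro (rfl | ⟨l, rfl⟩) j k hj hk
    · simp [blank] at hj
    · simp only [single, decide_eq_true_eq] at hj hk
      rw [hj, hk]
  · intro h
    by_cases hx : ∃ j, x j = true
    · obtain ⟨j, hj⟩ := hx
      refine Or.inr ⟨j, funext fun k => ?_⟩
      by_cases hkj : k = j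
      · simp [single, hkj, hj]
      · simpa [single, hkj] using mt (h k j · hj) hkj
    · simp only [not_exists, Bool.not_eq_true] at hx
      exact Or.inl (funext hx)

theorem isClosed_orbitClosure : IsClosed orbitClosure := by
  rw [orbitClosure_eq_setOf]
  simp only [ofPred_forall]
  refine isClosed_iInter fun j => isClosed_iInter fun k => ?_
  exact (isClosed_discrete {b : Bool × Bool | b.1 = true → b.2 = true → j = k}).preimage
    (by fun_prop : Continuous fun x : ℤ → Bool => (x j, x k))

theorem tendsto_single_blank : Tendsto single atTop (nhds blank) := by
  rw [tendsto_pi_nhds]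
  intro k
  rw [nhds_discrete, tendsto_pure]
  filter_upwards [eventually_gt_atTop k] with j hj
  simp [single, blank, hj.ne]

theorem closure_range_single : closure (range single) = orbitClosure :=
  (closure_minimal (subset_insert _ _) isClosed_orbitClosure).antisymm <|
    insert_subset (mem_closure_of_tendsto tendsto_single_blank (.of_forall (mem_range_self ·)))
      subset_closure

noncomputable def window (m n : ℕ) : Finset (ℤ → Bool) :=
  .cons blank ((Finset.Icc (-(m : ℤ)) (m + n - 1)).map ⟨single, single_injective⟩)
    (by simp [single_ne_blank])

theorem coe_window_subset (m n : ℕ) : ↑(window m n) ⊆ orbitClosure := by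
  rw [window, Finset.coe_cons, Finset.coe_map]
  exact insert_subset_insert (image_subset_range _ _)

theorem card_window (m n : ℕ) : (window m n).card = 2 * m + n + 1 := by
  rw [window, Finset.card_cons, Finset.card_map, Int.card_Icc]
  omega

def hyperspace : Set (Set (ℤ → Bool)) := {A | A.Nonempty ∧ IsClosed A ∧ A ⊆ orbitClosure}

def wordSet {n : ℕ} (w : Fin n → Bool) : Set (ℤ → Bool) :=
  insert blank ((fun i : Fin n => single i) '' {i | w i = true})

theorem wordSet_mem_hyperspace {n : ℕ} (w : Fin n → Bool) : wordSet w ∈ hyperspace := by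
  refine ⟨insert_nonempty _ _, ((toFinite _).image _).insert _ |>.isClosed, ?_⟩
  exact insert_subset_insert (image_subset_iff.2 fun i _ => mem_range_self _)

theorem eq_true_of_mem_wordSet {n : ℕ} {w : Fin n → Bool} {u : ℤ → Bool} (hu : u ∈ wordSet w)
    (i : Fin n) (hui : u i = true) : w i = true := by
  obtain rfl | ⟨i', hi', rfl⟩ := hu
  · simp [blank] at hui
  · simp only [single, decide_eq_true_eq, Nat.cast_inj, Fin.val_inj] at hui
    rwa [hui]

section Dist

variable [MetricSpace (ℤ → Bool)]

def IsCylinderDist : Prop :=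
  ∀ x y : ℤ → Bool, x ≠ y →
    dist x y = (2 : ℝ) ^ (-((sInf {m : ℕ | ∃ k : ℤ, k.natAbs = m ∧ x k ≠ y k} : ℕ) : ℤ))

theorem dist_le_one (hd : IsCylinderDist) (x y : ℤ → Bool) : dist x y ≤ 1 := by
  rcases eq_or_ne x y with rfl | hxy
  · simp
  · rw [hd x y hxy]
    exact zpow_le_one_of_nonpos₀ one_le_two (by omega)

theorem boundedSpace (hd : IsCylinderDist) : BoundedSpace (ℤ → Bool) :=
  boundedSpace_iff.2 ⟨1, dist_le_one hd⟩

theorem zpow_neg_natAbs_le_dist (hd : IsCylinderDist) {x y : ℤ → Bool} {k : ℤ} (h : x k ≠ y k) :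
    (2 : ℝ) ^ (-(k.natAbs : ℤ)) ≤ dist x y := by
  rw [hd x y fun e => h (congrFun e k)]
  exact zpow_le_zpow_right₀ one_le_two (neg_le_neg (Nat.cast_le.2 (Nat.sInf_le ⟨k, rfl, h⟩)))

theorem dist_single_blank (hd : IsCylinderDist) (j : ℤ) :
    dist (single j) blank = 2⁻¹ ^ j.natAbs := by
  have hset : {m : ℕ | ∃ k : ℤ, k.natAbs = m ∧ single j k ≠ blank k} = {j.natAbs} := by
    ext m
    simp only [single, blank, ne_eq, decide_eq_false_iff_not, not_not, mem_singleton_iff]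
    exact ⟨fun ⟨k, hkm, hkj⟩ => hkj ▸ hkm.symm, fun hm => ⟨j, hm.symm, rfl⟩⟩
  rw [hd _ _ (single_ne_blank j), hset, csInf_singleton, zpow_neg, zpow_natCast, inv_pow]

theorem dist_iterate_shift_blank_le_of_notMem_window (hd : IsCylinderDist) {m n i : ℕ}
    (hi : i < n) {x : ℤ → Bool} (hx : x ∈ orbitClosure) (hxW : x ∉ window m n) :
    dist (shift^[i] x) (shift^[i] blank) ≤ 2⁻¹ ^ m := by
  obtain rfl | ⟨j, rfl⟩ := hx
  · exact absurd (Finset.mem_cons_self _ _) hxW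
  have hj : ¬(-(m : ℤ) ≤ j ∧ j ≤ m + n - 1) := fun hj => hxW (by simp [window, hj])
  rw [iterate_shift_single, iterate_shift_blank, dist_single_blank hd]
  exact pow_le_pow_of_le_one (by norm_num) (by norm_num) (by omega)

theorem exists_isSpanningIn_card_le (hd : IsCylinderDist) {ε : ℝ} (hε : 0 < ε) :
    ∃ m : ℕ, ∀ n, ∃ E, IsSpanningIn hausdorffDist (image shift) hyperspace n ε E ∧
      E.card ≤ 2 ^ (2 * m + 1) * 2 ^ n := by
  classical
  obtain ⟨m, hm⟩ := exists_pow_lt_of_lt_one hε (by norm_num : (2⁻¹ : ℝ) < 1)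
  refine ⟨m, fun n => ?_⟩
  set τ : (ℤ → Bool) → ℤ → Bool := fun x => if x ∈ window m n then x else blank
  have hτW : ∀ x, τ x ∈ window m n := fun x => by
    unfold τ
    split_ifs with hx
    exacts [hx, Finset.mem_cons_self _ _]
  have hτB : ∀ A ∈ hyperspace, τ '' A ∈ hyperspace := by
    intro A hA
    have hτA : τ '' A ⊆ window m n := image_subset_iff.2 fun x _ => hτW x
    exact ⟨hA.1.image τ, ((window m n).finite_toSet.subset hτA).isClosed,
      hτA.trans (coe_window_subset m n)⟩
  have hτ : ∀ A ∈ hyperspace, ∀ x ∈ A, ∀ i < n,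
      dist (shift^[i] x) (shift^[i] (τ x)) ≤ 2⁻¹ ^ m := by
    intro A hA x hx i hi
    by_cases hxW : x ∈ window m n
    · simp [τ, hxW]
    · simpa [τ, hxW] using dist_iterate_shift_blank_le_of_notMem_window hd hi (hA.2.2 hx) hxW
  obtain ⟨E, hE, hEcard⟩ :=
    exists_isSpanningIn_card_le_two_pow (window m n) τ hτW hτB (by positivity) hm hτ
  exact ⟨E, hE, hEcard.trans_eq (by rw [card_window, ← pow_add]; ring_nf)⟩

theorem one_le_hausdorffDist_wordSet (hd : IsCylinderDist) {n : ℕ} {w w' : Fin n → Bool}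
    {i : Fin n} (hwi : w i = true) (hw'i : w' i = false) :
    1 ≤ hausdorffDist (shift^[i] '' wordSet w) (shift^[i] '' wordSet w') := by
  have := boundedSpace hd
  refine le_hausdorffDist_of_mem (x := shift^[i] (single i))
    (mem_image_of_mem _ (mem_insert_of_mem _ (mem_image_of_mem _ hwi)))
    ((wordSet_mem_hyperspace w').1.image _) ?_
  rintro _ ⟨u, hu, rfl⟩
  have hui : u i = false := by
    by_contra h
    simp [eq_true_of_mem_wordSet hu i (by simpa using h)] at hw'i
  simpa using zpow_neg_natAbs_le_dist hd (k := 0) (by simp [iterate_shift_apply, single, hui])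

theorem two_pow_le_card_of_isSpanningIn (hd : IsCylinderDist) {ε : ℝ} (hε : ε ≤ 1 / 2)
    {n : ℕ} {E : Finset (Set (ℤ → Bool))}
    (hE : IsSpanningIn hausdorffDist (image shift) hyperspace n ε E) : 2 ^ n ≤ E.card := by
  have := boundedSpace hd
  have hsep : Pairwise fun w w' : Fin n → Bool =>
      ∃ i < n, 2 * ε ≤ hausdorffDist (shift^[i] '' wordSet w) (shift^[i] '' wordSet w') := by
    intro w w' hne
    obtain ⟨i, hi⟩ := Function.ne_iff.1 hne
    refine ⟨i, i.is_lt, (by linarith : 2 * ε ≤ 1).trans ?_⟩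
    cases hwi : w i <;> cases hw'i : w' i <;> simp only [hwi, hw'i, ne_eq, not_true_eq_false] at hi
    · rw [hausdorffDist_comm]
      exact one_le_hausdorffDist_wordSet hd hw'i hwi
    · exact one_le_hausdorffDist_wordSet hd hwi hw'i
  simpa using card_le_card_of_isSpanningIn (fun A hA => hA.1) wordSet_mem_hyperspace hsep hE

theorem spanIn_le_mul_two_pow (hd : IsCylinderDist) {ε : ℝ} (hε : 0 < ε) :
    ∃ C > 0, ∀ n, spanIn hausdorffDist (image shift) hyperspace n ε ≤ C * 2 ^ n := by
  obtain ⟨m, hm⟩ := exists_isSpanningIn_card_le hd hε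
  refine ⟨2 ^ (2 * m + 1), by positivity, fun n => ?_⟩
  obtain ⟨E, hE, hEcard⟩ := hm n
  exact (spanIn_le_card hE).trans hEcard

theorem two_pow_le_spanIn (hd : IsCylinderDist) {ε : ℝ} (hε : 0 < ε) (hε' : ε ≤ 1 / 2) (n : ℕ) :
    2 ^ n ≤ spanIn hausdorffDist (image shift) hyperspace n ε :=
  le_spanIn (((exists_isSpanningIn_card_le hd hε).choose_spec n).imp fun _ => And.left)
    fun _ => two_pow_le_card_of_isSpanningIn hd hε'

theorem tendsto_log_spanIn_div (hd : IsCylinderDist) {ε : ℝ} (hε : 0 < ε) (hε' : ε ≤ 1 / 2) :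
    Tendsto (fun n : ℕ => Real.log (spanIn hausdorffDist (image shift) hyperspace n ε) / n) atTop
      (nhds (Real.log 2)) := by
  obtain ⟨C, -, hC⟩ := spanIn_le_mul_two_pow hd hε
  exact tendsto_log_div_of_pow_le_of_le_mul_pow (C := C) two_pos
    (fun n => by exact_mod_cast two_pow_le_spanIn hd hε hε' n) (fun n => by exact_mod_cast hC n)

end Dist

end Paper

open Paper Filter in
/-- Let `Σ₂ = {0,1}^ℤ` carry the metric `d(x,y) = 2^{-min{|k| : x_k ≠ y_k}}`
(for `x ≠ y`), `σ` the shift, `p` the point whose only `1` is at coordinate `0`, and `S` the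
closure of the `σ`-orbit of `p`.  Then the induced hyperspace map `σ_K` on the nonempty closed
subsets of `S` (with the Hausdorff distance) has topological entropy `log 2`; moreover its
generalized entropy is exactly the exponential order of growth `[2^n]`: the spanning numbers
are `≤ C·2^n` at every scale, and `≥ c·2^n` at some scale. -/
theorem induced_hyperspace_of_single_one_subshift
    [inst : MetricSpace (ℤ → Bool)]
    (hdist : ∀ x y : ℤ → Bool, x ≠ y →
      dist x y = (2 : ℝ) ^ (-((sInf {m : ℕ | ∃ k : ℤ, k.natAbs = m ∧ x k ≠ y k} : ℕ) : ℤ))) :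
    let σ : (ℤ → Bool) → (ℤ → Bool) := fun x k => x (k + 1)
    let p : ℤ → Bool := fun k => decide (k = 0)
    let S : Set (ℤ → Bool) := closure {y | ∃ n : ℤ, y = fun k => p (k + n)}
    let B : Set (Set (ℤ → Bool)) := {A | A.Nonempty ∧ IsClosed A ∧ A ⊆ S}
    let σK : Set (ℤ → Bool) → Set (ℤ → Bool) := fun A => σ '' A
    Filter.Tendsto (fun ε : ℝ =>
        Filter.limsup
          (fun n : ℕ =>
            ENNReal.ofReal (Real.log (spanIn Metric.hausdorffDist σK B n ε) / n))
          Filter.atTop)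
      (nhdsWithin 0 (Set.Ioi 0)) (nhds (ENNReal.ofReal (Real.log 2))) ∧
    (∀ ε > (0 : ℝ), ∃ C > (0 : ℝ), ∀ n : ℕ,
        (spanIn Metric.hausdorffDist σK B n ε : ℝ) ≤ C * 2 ^ n) ∧
    (∃ ε > (0 : ℝ), ∃ c > (0 : ℝ), ∀ n : ℕ,
        c * 2 ^ n ≤ (spanIn Metric.hausdorffDist σK B n ε : ℝ)) := by
  intro σ p S B σK
  have horbit : {y | ∃ n : ℤ, y = fun k => p (k + n)} = Set.range single := by
    have hp : ∀ n : ℤ, (fun k => p (k + n)) = single (-n) := fun n =>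
      funext fun k => decide_eq_decide.2 (by omega)
    ext y
    simp only [hp, Set.mem_range]
    exact ⟨fun ⟨n, h⟩ => ⟨-n, h.symm⟩, fun ⟨j, h⟩ => ⟨-j, by rw [neg_neg, h]⟩⟩
  have hB : B = hyperspace := by
    simp only [B, S, horbit, closure_range_single]
    rfl
  have hspan : ∀ n ε, spanIn hausdorffDist σK B n ε =
      spanIn hausdorffDist (Set.image shift) hyperspace n ε := by
    rw [hB]
    exact fun _ _ => rfl
  simp only [hspan]
  refine ⟨?_, fun ε hε => ?_, ⟨1 / 2, by norm_num, 1, one_pos, fun n => ?_⟩⟩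
  · refine tendsto_const_nhds.congr' ?_
    filter_upwards [Ioc_mem_nhdsGT (by norm_num : (0 : ℝ) < 1 / 2)] with ε hε
    exact ((ENNReal.continuous_ofReal.tendsto _).comp
      (tendsto_log_spanIn_div hdist hε.1 hε.2)).limsup_eq.symm
  · obtain ⟨C, hC0, hC⟩ := spanIn_le_mul_two_pow hdist hε
    exact ⟨C, Nat.cast_pos.2 hC0, fun n => by exact_mod_cast hC n⟩
  · rw [one_mul]
    exact_mod_cast two_pow_le_spanIn hdist (by norm_num) le_rfl n
end
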